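/- arXiv:2305.14297 — 2 statements merged into one kernel-verified Lean document; each statement's English description precedes it below -/
import Mathlib

section
/- Consider an absolutely conservative production–destruction system on ℝ^N whose functions p_{mν}, d_{mν} are nonnegative, twice continuously differentiable and Lipschitz continuous, an explicit s-stage Runge–Kutta scheme with nonnegative a_{ij}, b_j satisfying Σ_j b_j = 1, and a state y^n ∈ ℝ^N with positive entries. Suppose that for every h in some interval (0,h₀] there are positive denominators ρ_{iν}(h), σ_ν(h), stage vectors y^{(i)}(h) and an update y^{n+1}(h), all with positive entries, satisfying the MPRK stage and update equations; suppose moreover that y^{(i)}(h), y^{n+1}(h) and the ratios y^{(i)}_ν(h)/ρ_{iν}(h) remain bounded as h → 0⁺. If σ_μ(h) = y^n_μ + O(h) as h → 0⁺ for all μ = 1,…,N, then y^{n+1}(h) = y^n + h F(y^n) + O(h²) as h → 0⁺, i.e. the MPRK scheme is of order at least 1, where F_m(y) = Σ_ν (p_{mν}(y) − d_{mν}(y)). -/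
/-!
Every stage and the update have the form `yⁿ + h · I(h)`, where `I` is a Patankar-weighted
production–destruction sum. Along bounded stages the Lipschitz functions `p`, `d` stay bounded
and so do the Patankar weights, hence all stages and `yⁿ⁺¹` are `yⁿ + O(h)`. Then
`σ = yⁿ + O(h)` makes the update weights `yⁿ⁺¹_ν / σ_ν = 1 + O(h)`, and Lipschitz continuity gives
`p(y⁽ʲ⁾) = p(yⁿ) + O(h)`, so the update sum is `∑ b_j F(yⁿ) + O(h) = F(yⁿ) + O(h)`.
-/

open Topology Asymptotics Filter Finset

section Asymptotics

variable {α : Type*} {l : Filter α}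

theorem LipschitzWith.isBigO_comp_sub {E F G : Type*} [SeminormedAddCommGroup E]
    [SeminormedAddCommGroup F] [Norm G] {K : NNReal} {f : E → F} (hf : LipschitzWith K f)
    {x : α → E} {x₀ : E} {u : α → G} (hx : (fun t => x t - x₀) =O[l] u) :
    (fun t => f (x t) - f x₀) =O[l] u := by
  refine IsBigO.trans (IsBigO.of_bound K (Eventually.of_forall fun t => ?_)) hx
  simpa [dist_eq_norm] using hf.dist_le_mul (x t) x₀

theorem LipschitzWith.isBigO_one_comp {E F : Type*} [SeminormedAddCommGroup E]
    [SeminormedAddCommGroup F] {K : NNReal} {f : E → F} (hf : LipschitzWith K f)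
    {x : α → E} (hx : x =O[l] fun _ => (1 : ℝ)) :
    (fun t => f (x t)) =O[l] fun _ => (1 : ℝ) := by
  have h := (hf.isBigO_comp_sub (x₀ := 0) (by simpa only [sub_zero] using hx)).add
    (isBigO_const_const (f 0) one_ne_zero l)
  simpa only [sub_add_cancel] using h

theorem isBigO_mul_sub_mul {R : Type*} [NormedRing R] {f g : α → R} {a b : R} {u : α → ℝ}
    (hf : (fun t => f t - a) =O[l] u) (hg : (fun t => g t - b) =O[l] u)
    (hu : u =O[l] fun _ => (1 : ℝ)) :
    (fun t => f t * g t - a * b) =O[l] u := by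
  have hg₁ : g =O[l] fun _ => (1 : ℝ) := by
    simpa using (hg.trans hu).add (isBigO_const_const b one_ne_zero l)
  have h := hf.mul hg₁
  simp only [mul_one] at h
  exact (h.add (hg.const_mul_left a)).congr_left fun t => by noncomm_ring

theorem isBigO_div_sub_one {𝕜 : Type*} [NormedField 𝕜] {x σ : α → 𝕜} {c : 𝕜} {u : α → ℝ}
    (hxσ : (fun t => x t - σ t) =O[l] u) (hσ : Tendsto σ l (𝓝 c)) (hc : c ≠ 0) :
    (fun t => x t / σ t - 1) =O[l] u := by
  have h := hxσ.mul ((hσ.inv₀ hc).isBigO_one ℝ)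
  simp only [mul_one] at h
  refine h.congr' ?_ EventuallyEq.rfl
  filter_upwards [hσ.eventually_ne hc] with t ht
  field_simp

end Asymptotics

namespace MPRK

variable {N s : ℕ} (p d : Fin N → Fin N → (Fin N → ℝ) → ℝ)

/-- Shared by the stage equations (`w = a i`, `S = {j < i}`, `r_ν = y⁽ⁱ⁾_ν / ρ_{iν}`) and the
update (`w = b`, `S = univ`, `r_ν = yⁿ⁺¹_ν / σ_ν`). -/
def increment (w : Fin s → ℝ) (S : Finset (Fin s)) (Z : Fin s → Fin N → ℝ) (r : Fin N → ℝ)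
    (m : Fin N) : ℝ :=
  ∑ j ∈ S, w j * ∑ ν, (p m ν (Z j) * r ν - d m ν (Z j) * r m)

variable {p d} {α : Type*} {l : Filter α} {w : Fin s → ℝ} {S : Finset (Fin s)}
  {Z : α → Fin s → Fin N → ℝ} {r : α → Fin N → ℝ} {m : Fin N}

theorem isBigO_increment_one
    (hp : ∀ j ∈ S, ∀ ν, (fun t => p m ν (Z t j)) =O[l] fun _ => (1 : ℝ))
    (hd : ∀ j ∈ S, ∀ ν, (fun t => d m ν (Z t j)) =O[l] fun _ => (1 : ℝ))
    (hr : S.Nonempty → ∀ ν, (fun t => r t ν) =O[l] fun _ => (1 : ℝ)) :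
    (fun t => increment p d w S (Z t) (r t) m) =O[l] fun _ => (1 : ℝ) := by
  refine IsBigO.fun_sum fun j hj => IsBigO.const_mul_left ?_ _
  refine IsBigO.fun_sum fun ν _ => IsBigO.sub ?_ ?_
  · simpa only [mul_one] using (hp j hj ν).mul (hr ⟨j, hj⟩ ν)
  · simpa only [mul_one] using (hd j hj ν).mul (hr ⟨j, hj⟩ m)

theorem isBigO_increment_sub {z₀ : Fin N → ℝ} {u : α → ℝ}
    (hp : ∀ j ∈ S, ∀ ν, (fun t => p m ν (Z t j) - p m ν z₀) =O[l] u)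
    (hd : ∀ j ∈ S, ∀ ν, (fun t => d m ν (Z t j) - d m ν z₀) =O[l] u)
    (hr : ∀ ν, (fun t => r t ν - 1) =O[l] u) (hu : u =O[l] fun _ => (1 : ℝ)) :
    (fun t => increment p d w S (Z t) (r t) m -
      (∑ j ∈ S, w j) * ∑ ν, (p m ν z₀ - d m ν z₀)) =O[l] u := by
  have h : (fun t => ∑ j ∈ S, w j * ∑ ν, ((p m ν (Z t j) * r t ν - p m ν z₀ * 1) -
      (d m ν (Z t j) * r t m - d m ν z₀ * 1))) =O[l] u :=
    IsBigO.fun_sum fun j hj => IsBigO.const_mul_left (IsBigO.fun_sum fun ν _ =>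
      (isBigO_mul_sub_mul (hp j hj ν) (hr ν) hu).sub (isBigO_mul_sub_mul (hd j hj ν) (hr m) hu)) _
  refine h.congr_left fun t => ?_
  rw [increment, Finset.sum_mul, ← Finset.sum_sub_distrib]
  refine Finset.sum_congr rfl fun j _ => ?_
  rw [← mul_sub, ← Finset.sum_sub_distrib]
  simp only [mul_one, sub_sub_sub_comm]

theorem isBigO_sub_of_eventuallyEq_mul_increment {Kp Kd : Fin N → Fin N → NNReal}
    (hp : ∀ m ν, LipschitzWith (Kp m ν) (p m ν)) (hd : ∀ m ν, LipschitzWith (Kd m ν) (d m ν))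
    (hZ : ∀ j, (fun t => Z t j) =O[l] fun _ => (1 : ℝ))
    (hr : S.Nonempty → ∀ ν, (fun t => r t ν) =O[l] fun _ => (1 : ℝ))
    {x : α → Fin N → ℝ} {x₀ : Fin N → ℝ} {u : α → ℝ}
    (hx : ∀ m, (fun t => u t * increment p d w S (Z t) (r t) m) =ᶠ[l] fun t => x t m - x₀ m) :
    (fun t => x t - x₀) =O[l] u := by
  refine isBigO_pi.2 fun m => ?_
  have hG := isBigO_increment_one (w := w) (m := m) (fun j _ ν => (hp m ν).isBigO_one_comp (hZ j))
    (fun j _ ν => (hd m ν).isBigO_one_comp (hZ j)) hr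
  have h := (isBigO_refl u l).mul hG
  simp only [mul_one] at h
  exact h.congr' (hx m) .rfl

theorem isBigO_sub_sub_mul_of_eventuallyEq_mul_increment {Kp Kd : Fin N → Fin N → NNReal}
    (hp : ∀ m ν, LipschitzWith (Kp m ν) (p m ν)) (hd : ∀ m ν, LipschitzWith (Kd m ν) (d m ν))
    (hw : ∑ j ∈ S, w j = 1) {z₀ : Fin N → ℝ} {u : α → ℝ} (hu : Tendsto u l (𝓝 0))
    (hZ : ∀ j, (fun t => Z t j - z₀) =O[l] u) (hr : ∀ ν, (fun t => r t ν - 1) =O[l] u)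
    {x : α → ℝ} {x₀ : ℝ}
    (hx : (fun t => u t * increment p d w S (Z t) (r t) m) =ᶠ[l] fun t => x t - x₀) :
    (fun t => x t - (x₀ + u t * ∑ ν, (p m ν z₀ - d m ν z₀))) =O[l] fun t => u t * u t := by
  have h := isBigO_increment_sub (w := w) (S := S) (Z := Z)
    (fun j _ ν => (hp m ν).isBigO_comp_sub (hZ j)) (fun j _ ν => (hd m ν).isBigO_comp_sub (hZ j))
    hr (hu.isBigO_one ℝ)
  refine ((isBigO_refl u l).mul h).congr' ?_ .rfl
  filter_upwards [hx] with t ht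
  rw [hw, one_mul, mul_sub, ht]
  ring

end MPRK

theorem stmt12_general (N s : ℕ)
    (p d : Fin N → Fin N → (Fin N → ℝ) → ℝ)
    (hpL : ∀ m ν, ∃ K, LipschitzWith K (p m ν))
    (hdL : ∀ m ν, ∃ K, LipschitzWith K (d m ν))
    (a : Fin s → Fin s → ℝ) (b : Fin s → ℝ)
    (hbsum : ∑ j, b j = 1)
    (yn : Fin N → ℝ) (hyn : ∀ m, 0 < yn m)
    (F : (Fin N → ℝ) → (Fin N → ℝ))
    (hF : ∀ y m, F y m = ∑ ν, (p m ν y - d m ν y))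
    (ρ : ℝ → Fin s → Fin N → ℝ) (σ : ℝ → Fin N → ℝ)
    (Y : ℝ → Fin s → Fin N → ℝ) (ynext : ℝ → Fin N → ℝ)
    (hscheme : ∃ h₀ > (0 : ℝ), ∀ h ∈ Set.Ioc (0 : ℝ) h₀,
      (∀ (i : Fin s) ν, (i : ℕ) ≠ 0 → 0 < ρ h i ν) ∧
      (∀ ν, 0 < σ h ν) ∧
      (∀ i m, 0 < Y h i m) ∧ (∀ m, 0 < ynext h m) ∧
      (∀ i m, Y h i m = yn m +
        h * ∑ j ∈ Finset.univ.filter (fun j => j < i), a i j *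
          ∑ ν, (p m ν (Y h j) * Y h i ν / ρ h i ν -
                d m ν (Y h j) * Y h i m / ρ h i m)) ∧
      (∀ m, ynext h m = yn m +
        h * ∑ j, b j *
          ∑ ν, (p m ν (Y h j) * ynext h ν / σ h ν -
                d m ν (Y h j) * ynext h m / σ h m)))
    (hYbdd : ∀ i ν, (fun h => Y h i ν) =O[𝓝[>] (0 : ℝ)] fun _ => (1 : ℝ))
    (hynextbdd : ∀ m, (fun h => ynext h m) =O[𝓝[>] (0 : ℝ)] fun _ => (1 : ℝ))
    (hratiobdd : ∀ i : Fin s, (i : ℕ) ≠ 0 → ∀ ν,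
      (fun h => Y h i ν / ρ h i ν) =O[𝓝[>] (0 : ℝ)] fun _ => (1 : ℝ))
    (hσ : ∀ μ, (fun h => σ h μ - yn μ) =O[𝓝[>] (0 : ℝ)] fun h => h) :
    (fun h => ynext h - (yn + h • F yn)) =O[𝓝[>] (0 : ℝ)] fun h => h ^ 2 := by
  obtain ⟨h₀, hh₀, hsch⟩ := hscheme
  have hev : ∀ᶠ h in 𝓝[>] (0 : ℝ), h ∈ Set.Ioc 0 h₀ := Ioc_mem_nhdsGT hh₀
  have hstageEq : ∀ i m, (fun h => h * MPRK.increment p d (a i) (univ.filter (· < i)) (Y h)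
      (fun ν => Y h i ν / ρ h i ν) m) =ᶠ[𝓝[>] (0 : ℝ)] fun h => Y h i m - yn m :=
    fun i m => hev.mono fun h hh => by
      beta_reduce
      rw [(hsch h hh).2.2.2.2.1 i m, MPRK.increment]
      simp only [mul_div_assoc, add_sub_cancel_left]
  have hupdateEq : ∀ m, (fun h => h * MPRK.increment p d b univ (Y h)
      (fun ν => ynext h ν / σ h ν) m) =ᶠ[𝓝[>] (0 : ℝ)] fun h => ynext h m - yn m :=
    fun m => hev.mono fun h hh => by
      beta_reduce
      rw [(hsch h hh).2.2.2.2.2 m, MPRK.increment]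
      simp only [mul_div_assoc, add_sub_cancel_left]
  choose Kp hKp using hpL
  choose Kd hKd using hdL
  have hY : ∀ j, (fun h => Y h j) =O[𝓝[>] (0 : ℝ)] fun _ => (1 : ℝ) :=
    fun j => isBigO_pi.2 (hYbdd j)
  have hstage : ∀ i, (fun h => Y h i - yn) =O[𝓝[>] (0 : ℝ)] fun h => h := fun i =>
    MPRK.isBigO_sub_of_eventuallyEq_mul_increment hKp hKd hY
      (fun ⟨j, hj⟩ => hratiobdd i (Nat.ne_zero_of_lt (mem_filter.1 hj).2)) (hstageEq i)
  have hh : Tendsto (fun h : ℝ => h) (𝓝[>] 0) (𝓝 0) := nhdsWithin_le_nhds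
  have hσc : ∀ ν, Tendsto (fun h => σ h ν) (𝓝[>] 0) (𝓝 (yn ν)) := fun ν => by
    simpa using ((hσ ν).trans_tendsto hh).add_const (yn ν)
  have hupdate : (fun h => ynext h - yn) =O[𝓝[>] (0 : ℝ)] fun h => h :=
    MPRK.isBigO_sub_of_eventuallyEq_mul_increment hKp hKd hY (fun _ ν => by
      simpa [div_eq_mul_inv] using (hynextbdd ν).mul (((hσc ν).inv₀ (hyn ν).ne').isBigO_one ℝ))
      hupdateEq
  have hratio : ∀ ν, (fun h => ynext h ν / σ h ν - 1) =O[𝓝[>] (0 : ℝ)] fun h => h :=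
    fun ν => isBigO_div_sub_one (((isBigO_pi.1 hupdate ν).sub (hσ ν)).congr_left fun h =>
      sub_sub_sub_cancel_right _ _ _) (hσc ν) (hyn ν).ne'
  refine isBigO_pi.2 fun m => ?_
  simpa only [Pi.sub_apply, Pi.add_apply, Pi.smul_apply, smul_eq_mul, hF, sq] using
    MPRK.isBigO_sub_sub_mul_of_eventuallyEq_mul_increment hKp hKd hbsum hh hstage hratio
      (hupdateEq m)

/-- First-order sufficiency for MPRK schemes (cf. Theorem 5.5 of
Izgin–Ketcheson–Meister): if σ_μ = yⁿ_μ + O(h), then the MPRK scheme is of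
order at least one. -/
theorem stmt12 (N s : ℕ)
    (p d : Fin N → Fin N → (Fin N → ℝ) → ℝ)
    (hp0 : ∀ m ν y, 0 ≤ p m ν y) (hd0 : ∀ m ν y, 0 ≤ d m ν y)
    (hpC : ∀ m ν, ContDiff ℝ 2 (p m ν)) (hdC : ∀ m ν, ContDiff ℝ 2 (d m ν))
    (hpL : ∀ m ν, ∃ K, LipschitzWith K (p m ν))
    (hdL : ∀ m ν, ∃ K, LipschitzWith K (d m ν))
    (hcons : ∀ m ν, p m ν = d ν m)
    (hdiagp : ∀ m, p m m = 0) (hdiagd : ∀ m, d m m = 0)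
    (a : Fin s → Fin s → ℝ) (b : Fin s → ℝ)
    (hexp : ∀ i j : Fin s, i ≤ j → a i j = 0)
    (ha : ∀ i j, 0 ≤ a i j) (hb : ∀ j, 0 ≤ b j)
    (hbsum : ∑ j, b j = 1)
    (yn : Fin N → ℝ) (hyn : ∀ m, 0 < yn m)
    (F : (Fin N → ℝ) → (Fin N → ℝ))
    (hF : ∀ y m, F y m = ∑ ν, (p m ν y - d m ν y))
    (ρ : ℝ → Fin s → Fin N → ℝ) (σ : ℝ → Fin N → ℝ)
    (Y : ℝ → Fin s → Fin N → ℝ) (ynext : ℝ → Fin N → ℝ)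
    (hscheme : ∃ h₀ > (0 : ℝ), ∀ h ∈ Set.Ioc (0 : ℝ) h₀,
      (∀ (i : Fin s) ν, (i : ℕ) ≠ 0 → 0 < ρ h i ν) ∧
      (∀ ν, 0 < σ h ν) ∧
      (∀ i m, 0 < Y h i m) ∧ (∀ m, 0 < ynext h m) ∧
      (∀ i m, Y h i m = yn m +
        h * ∑ j ∈ Finset.univ.filter (fun j => j < i), a i j *
          ∑ ν, (p m ν (Y h j) * Y h i ν / ρ h i ν -
                d m ν (Y h j) * Y h i m / ρ h i m)) ∧
      (∀ m, ynext h m = yn m +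
        h * ∑ j, b j *
          ∑ ν, (p m ν (Y h j) * ynext h ν / σ h ν -
                d m ν (Y h j) * ynext h m / σ h m)))
    (hYbdd : ∀ i ν, (fun h => Y h i ν) =O[𝓝[>] (0 : ℝ)] fun _ => (1 : ℝ))
    (hynextbdd : ∀ m, (fun h => ynext h m) =O[𝓝[>] (0 : ℝ)] fun _ => (1 : ℝ))
    (hratiobdd : ∀ i : Fin s, (i : ℕ) ≠ 0 → ∀ ν,
      (fun h => Y h i ν / ρ h i ν) =O[𝓝[>] (0 : ℝ)] fun _ => (1 : ℝ))
    (hσ : ∀ μ, (fun h => σ h μ - yn μ) =O[𝓝[>] (0 : ℝ)] fun h => h) :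
    (fun h => ynext h - (yn + h • F yn)) =O[𝓝[>] (0 : ℝ)] fun h => h ^ 2 :=
  stmt12_general N s p d hpL hdL a b hbsum yn hyn F hF ρ σ Y ynext hscheme hYbdd hynextbdd hratiobdd
    hσ
end

section
/- Consider an absolutely conservative production–destruction system on ℝ^N whose functions p_{mν}, d_{mν} are nonnegative, three times continuously differentiable and Lipschitz continuous, an explicit 2-stage Runge–Kutta scheme of order 2 with nonnegative coefficients (b₁ + b₂ = 1, b₂c₂ = 1/2, c₂ = a₂₁), and a state y^n ∈ ℝ^N with positive entries. Suppose that for every h in some interval (0,h₀] there are positive denominators ρ_{2ν}(h), σ_ν(h), a stage y^{(2)}(h) and an update y^{n+1}(h), all with positive entries, satisfying the MPRK stage and update equations; suppose moreover that y^{(2)}(h), y^{n+1}(h) and the ratios y^{(2)}_ν(h)/ρ_{2ν}(h) remain bounded as h → 0⁺. If ρ_{2ν}(h) = y^n_ν + O(h) for all ν and σ_μ(h) = y^n_μ + h F_μ(y^n) + O(h²) for all μ, then y^{n+1}(h) = y^n + h F(y^n) + (h²/2) DF(y^n) F(y^n) + O(h³) as h → 0⁺, i.e. the MPRK scheme is of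 order at least 2; here F_m(y) = Σ_ν (p_{mν}(y) − d_{mν}(y)) and DF is the Jacobian of F. -/
/-!
The MPRK stage and update have the form `y + h • T(h)`, where `T` is a combination of
Patankar-weighted right-hand sides `∑ ν, (p m ν y * w ν - d m ν y * w m)`. These are linear in the
weights `w` and reduce to `F y` at `w = 1`, so a weight error `w - 1 = O(g)` perturbs `T` only by
`O(g)`. The hypothesis on `ρ` gives `y⁽²⁾/ρ - 1 = O(h)`, hence `y⁽²⁾ = yⁿ + h c₂ F(yⁿ) + O(h²)`.
For the update, the hypothesis on `σ` makes the weights `yⁿ⁺¹/σ - 1` successively `O(1)`, `O(h)`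
and `O(h²)`, each step improving the error of `yⁿ⁺¹` by one order. In the last step the Taylor
expansion `F(y⁽²⁾) = F(yⁿ) + h c₂ DF(yⁿ) F(yⁿ) + O(h²)` and `b₂ c₂ = 1/2` produce the
second-order term.
-/

open Topology Asymptotics Filter Finset

theorem isBigO_sq_id_nhdsGT : (fun h : ℝ => h ^ 2) =O[𝓝[>] 0] fun h => h :=
  (isLittleO_pow_id one_lt_two).isBigO.mono nhdsWithin_le_nhds

theorem isBigO_id_one_nhdsGT : (fun h : ℝ => h) =O[𝓝[>] 0] fun _ => (1 : ℝ) :=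
  (tendsto_id.mono_left nhdsWithin_le_nhds).isBigO_one ℝ

theorem tendsto_of_isBigO_sub {E : Type*} [NormedAddCommGroup E] {Y : ℝ → E} {x₀ : E}
    (hY : (fun h => Y h - x₀) =O[𝓝[>] 0] fun h => h) : Tendsto Y (𝓝[>] 0) (𝓝 x₀) :=
  tendsto_sub_nhds_zero_iff.1 (hY.trans_tendsto (tendsto_id.mono_left nhdsWithin_le_nhds))

theorem isBigO_sub_of_sub_add_smul {E : Type*} [NormedAddCommGroup E] [NormedSpace ℝ E]
    {Y : ℝ → E} {x₀ v : E} (hY : (fun h => Y h - (x₀ + h • v)) =O[𝓝[>] 0] fun h => h ^ 2) :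
    (fun h => Y h - x₀) =O[𝓝[>] 0] fun h => h := by
  have hv : (fun h : ℝ => h • v) =O[𝓝[>] 0] fun h => h :=
    (isBigO_refl _ _).smul (isBigO_const_one ℝ v _) |>.congr_right fun h => by simp
  exact ((hY.trans isBigO_sq_id_nhdsGT).add hv).congr_left fun h => by abel

theorem isBigO_div_sub_one_s13 {α ι : Type*} [Fintype ι] {l : Filter α} {u v : α → ι → ℝ}
    {A : ι → ℝ} {g : α → ℝ} (hA : ∀ i, A i ≠ 0) (hv : Tendsto v l (𝓝 A))
    (huv : (fun t => u t - v t) =O[l] g) : (fun t => u t / v t - 1) =O[l] g := by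
  refine isBigO_pi.2 fun i => ?_
  have hvi : Tendsto (fun t => v t i) l (𝓝 (A i)) := tendsto_pi_nhds.1 hv i
  refine ((isBigO_pi.1 huv i).mul ((hvi.inv₀ (hA i)).isBigO_one ℝ)).congr' ?_ (by simp)
  filter_upwards [hvi.eventually_ne (hA i)] with t ht
  simp only [Pi.sub_apply, Pi.div_apply, Pi.one_apply]
  field_simp

theorem isBigO_sub_add_smul {E : Type*} [NormedAddCommGroup E] [NormedSpace ℝ E]
    {l : Filter ℝ} {x T T₀ : ℝ → E} {x₀ : E} {g : ℝ → ℝ}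
    (hx : ∀ᶠ h in l, x h = x₀ + h • T h) (hT : (fun h => T h - T₀ h) =O[l] g) :
    (fun h => x h - (x₀ + h • T₀ h)) =O[l] fun h => h * g h := by
  refine ((isBigO_refl (fun h : ℝ => h) l).smul hT).congr' ?_ (by simp)
  filter_upwards [hx] with h hh
  rw [hh, smul_sub]
  abel

section Taylor

variable {E G : Type*} [NormedAddCommGroup E] [NormedSpace ℝ E]
  [NormedAddCommGroup G] [NormedSpace ℝ G]

theorem ContDiffAt.isBigO_sub_sub_fderiv {g : E → G} {x : E} (hg : ContDiffAt ℝ 2 g x) :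
    (fun y => g y - g x - fderiv ℝ g x (y - x)) =O[𝓝 x] fun y => ‖y - x‖ ^ 2 := by
  obtain ⟨C, hC0, hC⟩ :=
    ((hg.fderiv_right (m := 1) (by norm_num)).differentiableAt one_ne_zero).isBigO_sub.exists_nonneg
  have hdiff : ∀ᶠ z in 𝓝 x, DifferentiableAt ℝ g z :=
    (hg.eventually (by simp)).mono fun z hz => hz.differentiableAt (by norm_num)
  obtain ⟨r, hr, hball⟩ := Metric.eventually_nhds_iff_ball.1 (hC.bound.and hdiff)
  refine IsBigO.of_bound C (Metric.eventually_nhds_iff_ball.2 ⟨r, hr, fun y hy => ?_⟩)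
  have hsub : Metric.closedBall x ‖y - x‖ ⊆ Metric.ball x r :=
    Metric.closedBall_subset_ball (by rwa [← dist_eq_norm])
  have hbound : ∀ z ∈ Metric.closedBall x ‖y - x‖,
      ‖fderiv ℝ g z - fderiv ℝ g x‖ ≤ C * ‖y - x‖ := fun z hz => by
    refine (hball z (hsub hz)).1.trans (mul_le_mul_of_nonneg_left ?_ hC0)
    simpa [dist_eq_norm] using hz
  have := (convex_closedBall x ‖y - x‖).norm_image_sub_le_of_norm_fderiv_le'
    (fun z hz => (hball z (hsub hz)).2) hbound (Metric.mem_closedBall_self (norm_nonneg _))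
    (Metric.mem_closedBall.2 (dist_eq_norm y x).le)
  rwa [norm_pow, norm_norm, sq, ← mul_assoc]

theorem ContDiffAt.isBigO_comp_sub_add_fderiv {F : E → G} {x₀ v : E} {Y : ℝ → E}
    (hF : ContDiffAt ℝ 2 F x₀) (hY : (fun h => Y h - (x₀ + h • v)) =O[𝓝[>] 0] fun h => h ^ 2) :
    (fun h => F (Y h) - (F x₀ + h • fderiv ℝ F x₀ v)) =O[𝓝[>] 0] fun h => h ^ 2 := by
  have hY₁ := isBigO_sub_of_sub_add_smul hY
  have htaylor := (hF.isBigO_sub_sub_fderiv.comp_tendsto (tendsto_of_isBigO_sub hY₁)).trans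
    (hY₁.norm_left.pow 2)
  refine (htaylor.add ((fderiv ℝ F x₀).isBigO_comp _ _ |>.trans hY)).congr_left fun h => ?_
  simp only [Function.comp_apply, map_sub, map_add, map_smul]
  abel

end Taylor

section Patankar

variable {ι : Type*} [Fintype ι]

def patankarRHS (p d : ι → ι → (ι → ℝ) → ℝ) (y w : ι → ℝ) : ι → ℝ :=
  fun m => ∑ ν, (p m ν y * w ν - d m ν y * w m)

variable {p d : ι → ι → (ι → ℝ) → ℝ} {y₀ : ι → ℝ}

theorem patankarRHS_sub (y w w' : ι → ℝ) :
    patankarRHS p d y w - patankarRHS p d y w' = patankarRHS p d y (w - w') := by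
  ext m
  simp only [patankarRHS, Pi.sub_apply, ← Finset.sum_sub_distrib]
  exact Finset.sum_congr rfl fun ν _ => by ring

theorem mprk2_stage_eq {a : Fin 2 → Fin 2 → ℝ} {h : ℝ} {Y ρ : Fin 2 → ι → ℝ}
    (hY : ∀ i m, Y i m = y₀ m + h * ∑ j ∈ univ.filter (fun j => j < i), a i j *
      ∑ ν, (p m ν (Y j) * Y i ν / ρ i ν - d m ν (Y j) * Y i m / ρ i m)) :
    Y 0 = y₀ ∧ Y 1 = y₀ + h • a 1 0 • patankarRHS p d y₀ (Y 1 / ρ 1) := by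
  have hY₀ : Y 0 = y₀ := funext fun m => by simpa using hY 0 m
  refine ⟨hY₀, funext fun m => ?_⟩
  have : univ.filter (fun j : Fin 2 => j < 1) = {0} := by decide
  rw [hY 1 m, this, sum_singleton, hY₀]
  simp [patankarRHS, mul_div_assoc]

theorem mprk2_update_eq {b : Fin 2 → ℝ} {h : ℝ} {Y : Fin 2 → ι → ℝ} {x σ : ι → ℝ}
    (hY₀ : Y 0 = y₀) (hx : ∀ m, x m = y₀ m + h * ∑ j, b j *
      ∑ ν, (p m ν (Y j) * x ν / σ ν - d m ν (Y j) * x m / σ m)) :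
    x = y₀ + h • (b 0 • patankarRHS p d y₀ (x / σ) + b 1 • patankarRHS p d (Y 1) (x / σ)) := by
  funext m
  rw [hx m, Fin.sum_univ_two, hY₀]
  simp only [patankarRHS, Pi.add_apply, Pi.smul_apply, Pi.div_apply, smul_eq_mul, mul_div_assoc,
    mul_add]

variable {α : Type*} {l : Filter α} {y w : α → ι → ℝ} {g : α → ℝ}

theorem isBigO_patankarRHS (hp : ∀ m ν, ContinuousAt (p m ν) y₀)
    (hd : ∀ m ν, ContinuousAt (d m ν) y₀) (hy : Tendsto y l (𝓝 y₀)) (hw : w =O[l] g) :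
    (fun t => patankarRHS p d (y t) (w t)) =O[l] g := by
  have hbdd : ∀ f : ι → ι → (ι → ℝ) → ℝ, (∀ m ν, ContinuousAt (f m ν) y₀) →
      ∀ m ν i, (fun t => f m ν (y t) * w t i) =O[l] g := fun f hf m ν i =>
    (((hf m ν).tendsto.comp hy).isBigO_one ℝ).mul (isBigO_pi.1 hw i) |>.congr_right
      fun t => one_mul _
  exact isBigO_pi.2 fun m => IsBigO.fun_sum fun ν _ => (hbdd p hp m ν ν).sub (hbdd d hd m ν m)

theorem isBigO_patankarRHS_sub_one (hp : ∀ m ν, ContinuousAt (p m ν) y₀)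
    (hd : ∀ m ν, ContinuousAt (d m ν) y₀) (hy : Tendsto y l (𝓝 y₀))
    (hw : (fun t => w t - 1) =O[l] g) :
    (fun t => patankarRHS p d (y t) (w t) - patankarRHS p d (y t) 1) =O[l] g := by
  simpa only [patankarRHS_sub] using isBigO_patankarRHS hp hd hy hw

theorem mprk_stage_expansion (hp : ∀ m ν, ContinuousAt (p m ν) y₀)
    (hd : ∀ m ν, ContinuousAt (d m ν) y₀) (hy₀ : ∀ m, 0 < y₀ m) {a : ℝ} {Y ρ : ℝ → ι → ℝ}
    (hY : ∀ᶠ h in 𝓝[>] 0, Y h = y₀ + h • a • patankarRHS p d y₀ (Y h / ρ h))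
    (hratio : (fun h => Y h / ρ h) =O[𝓝[>] 0] fun _ => (1 : ℝ))
    (hρ : (fun h => ρ h - y₀) =O[𝓝[>] 0] fun h => h) :
    (fun h => Y h - (y₀ + h • a • patankarRHS p d y₀ 1)) =O[𝓝[>] 0] fun h => h ^ 2 := by
  have hY₁ : (fun h => Y h - y₀) =O[𝓝[>] 0] fun h => h := by
    simpa using isBigO_sub_add_smul (T₀ := 0) hY
      (((isBigO_patankarRHS hp hd tendsto_const_nhds hratio).const_smul_left a).congr_left
        fun h => (sub_zero _).symm)
  have hratio₁ : (fun h => Y h / ρ h - 1) =O[𝓝[>] 0] fun h => h :=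
    isBigO_div_sub_one_s13 (fun m => (hy₀ m).ne') (tendsto_of_isBigO_sub hρ)
      (by simpa using hY₁.sub hρ)
  simpa only [sq] using isBigO_sub_add_smul hY
    (((isBigO_patankarRHS_sub_one hp hd tendsto_const_nhds hratio₁).const_smul_left a).congr_left
      fun _ => by simp only [Pi.smul_apply, smul_sub])

theorem mprk_update_expansion (hp : ∀ m ν, ContinuousAt (p m ν) y₀)
    (hd : ∀ m ν, ContinuousAt (d m ν) y₀) {F : (ι → ℝ) → ι → ℝ}
    (hF : ∀ y, patankarRHS p d y 1 = F y) (hF₂ : ContDiffAt ℝ 2 F y₀) (hy₀ : ∀ m, 0 < y₀ m)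
    {b₀ b₁ c : ℝ} (hb : b₀ + b₁ = 1) (hbc : b₁ * c = 1 / 2) {Y x σ : ℝ → ι → ℝ}
    (hY : (fun h => Y h - (y₀ + h • c • F y₀)) =O[𝓝[>] 0] fun h => h ^ 2)
    (hx : ∀ᶠ h in 𝓝[>] 0, x h = y₀ + h • (b₀ • patankarRHS p d y₀ (x h / σ h)
      + b₁ • patankarRHS p d (Y h) (x h / σ h)))
    (hxbdd : x =O[𝓝[>] 0] fun _ => (1 : ℝ))
    (hσ : (fun h => σ h - (y₀ + h • F y₀)) =O[𝓝[>] 0] fun h => h ^ 2) :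
    (fun h => x h - (y₀ + h • F y₀ + (h ^ 2 / 2) • fderiv ℝ F y₀ (F y₀)))
      =O[𝓝[>] 0] fun h => h ^ 3 := by
  obtain rfl : b₀ = 1 - b₁ := by linarith
  have hYt := tendsto_of_isBigO_sub (isBigO_sub_of_sub_add_smul hY)
  have hσt := tendsto_of_isBigO_sub (isBigO_sub_of_sub_add_smul hσ)
  have hFY₂ := hF₂.isBigO_comp_sub_add_fderiv hY
  have hFY := isBigO_sub_of_sub_add_smul hFY₂
  set w := fun h => x h / σ h
  have hT : ∀ {g : ℝ → ℝ}, (fun h => w h - 1) =O[𝓝[>] 0] g →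
      (fun h => ((1 - b₁) • patankarRHS p d y₀ (w h) + b₁ • patankarRHS p d (Y h) (w h))
        - ((1 - b₁) • F y₀ + b₁ • F (Y h))) =O[𝓝[>] 0] g := fun hw =>
    ((isBigO_patankarRHS_sub_one hp hd tendsto_const_nhds hw).const_smul_left (1 - b₁) |>.add
      ((isBigO_patankarRHS_sub_one hp hd hYt hw).const_smul_left b₁)).congr_left fun h => by
        simp only [Pi.smul_apply, ← hF, smul_sub]; abel
  have hw : ∀ {g : ℝ → ℝ}, (fun h => x h - (y₀ + h • F y₀)) =O[𝓝[>] 0] g →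
      (fun h => h ^ 2) =O[𝓝[>] 0] g → (fun h => w h - 1) =O[𝓝[>] 0] g := fun hxg hg =>
    isBigO_div_sub_one_s13 (fun m => (hy₀ m).ne') hσt
      ((hxg.sub (hσ.trans hg)).congr_left fun h => by abel)
  have hxw : ∀ {g : ℝ → ℝ}, (fun h => w h - 1) =O[𝓝[>] 0] g → (fun h : ℝ => h) =O[𝓝[>] 0] g →
      (fun h => x h - (y₀ + h • F y₀)) =O[𝓝[>] 0] fun h => h * g h := fun hw hg =>
    isBigO_sub_add_smul (T₀ := fun _ => F y₀) hx
      (((hT hw).add ((hFY.trans hg).const_smul_left b₁)).congr_left fun h => by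
        simp only [Pi.smul_apply]; module)
  have hw₁ : (fun h => w h - 1) =O[𝓝[>] 0] fun _ => (1 : ℝ) :=
    isBigO_div_sub_one_s13 (fun m => (hy₀ m).ne') hσt (hxbdd.sub (hσt.isBigO_one ℝ))
  have hw₂ : (fun h => w h - 1) =O[𝓝[>] 0] fun h => h :=
    hw ((hxw hw₁ isBigO_id_one_nhdsGT).congr_right fun h => mul_one h) isBigO_sq_id_nhdsGT
  have hw₃ : (fun h => w h - 1) =O[𝓝[>] 0] fun h => h ^ 2 :=
    hw ((hxw hw₂ (isBigO_refl _ _)).congr_right fun h => (sq h).symm) (isBigO_refl _ _)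
  refine (isBigO_sub_add_smul (T₀ := fun h => F y₀ + (h / 2) • fderiv ℝ F y₀ (F y₀)) hx
    ((hT hw₃).add (hFY₂.const_smul_left b₁) |>.congr_left fun h => ?_)).congr ?_ ?_
  · simp only [Pi.smul_apply, map_smul]
    linear_combination (norm := module) hbc • (-h • fderiv ℝ F y₀ (F y₀))
  · intro h; module
  · intro h; ring

end Patankar

-- Stage indices are 0-based: `Y h 1` is the second stage `y⁽²⁾`.
theorem stmt13_general (N : ℕ)
    (p d : Fin N → Fin N → (Fin N → ℝ) → ℝ)
    (hpC : ∀ m ν, ContDiff ℝ 3 (p m ν)) (hdC : ∀ m ν, ContDiff ℝ 3 (d m ν))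
    (a : Fin 2 → Fin 2 → ℝ) (b c : Fin 2 → ℝ)
    (hexp : ∀ i j : Fin 2, i ≤ j → a i j = 0)
    (hc : ∀ i, c i = ∑ j, a i j)
    (hord1 : b 0 + b 1 = 1) (hord2 : b 1 * c 1 = 1 / 2)
    (yn : Fin N → ℝ) (hyn : ∀ m, 0 < yn m)
    (F : (Fin N → ℝ) → (Fin N → ℝ))
    (hF : ∀ y m, F y m = ∑ ν, (p m ν y - d m ν y))
    (ρ : ℝ → Fin 2 → Fin N → ℝ) (σ : ℝ → Fin N → ℝ)
    (Y : ℝ → Fin 2 → Fin N → ℝ) (ynext : ℝ → Fin N → ℝ)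
    (hscheme : ∃ h₀ > (0 : ℝ), ∀ h ∈ Set.Ioc (0 : ℝ) h₀,
      (∀ (i : Fin 2) ν, i ≠ 0 → 0 < ρ h i ν) ∧
      (∀ ν, 0 < σ h ν) ∧
      (∀ i m, 0 < Y h i m) ∧ (∀ m, 0 < ynext h m) ∧
      (∀ i m, Y h i m = yn m +
        h * ∑ j ∈ Finset.univ.filter (fun j => j < i), a i j *
          ∑ ν, (p m ν (Y h j) * Y h i ν / ρ h i ν -
                d m ν (Y h j) * Y h i m / ρ h i m)) ∧
      (∀ m, ynext h m = yn m +
        h * ∑ j, b j *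
          ∑ ν, (p m ν (Y h j) * ynext h ν / σ h ν -
                d m ν (Y h j) * ynext h m / σ h m)))
    (hynextbdd : ∀ m, (fun h => ynext h m) =O[𝓝[>] (0 : ℝ)] fun _ => (1 : ℝ))
    (hratiobdd : ∀ ν,
      (fun h => Y h 1 ν / ρ h 1 ν) =O[𝓝[>] (0 : ℝ)] fun _ => (1 : ℝ))
    (hρ : ∀ ν, (fun h => ρ h 1 ν - yn ν) =O[𝓝[>] (0 : ℝ)] fun h => h)
    (hσ : ∀ μ, (fun h => σ h μ - (yn μ + h * F yn μ))
      =O[𝓝[>] (0 : ℝ)] fun h => h ^ 2) :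
    (fun h => ynext h - (yn + h • F yn + (h ^ 2 / 2) • fderiv ℝ F yn (F yn)))
      =O[𝓝[>] (0 : ℝ)] fun h => h ^ 3 := by
  obtain ⟨h₀, hh₀, hs⟩ := hscheme
  have hsch := eventually_of_mem (Ioc_mem_nhdsGT hh₀) hs
  have hstage := hsch.mono fun h hh => mprk2_stage_eq hh.2.2.2.2.1
  have hp : ∀ m ν, ContinuousAt (p m ν) yn := fun m ν => (hpC m ν).continuous.continuousAt
  have hd : ∀ m ν, ContinuousAt (d m ν) yn := fun m ν => (hdC m ν).continuous.continuousAt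
  have hFeq : ∀ y, patankarRHS p d y 1 = F y := fun y => funext fun m => by
    simp [patankarRHS, hF]
  have hF₂ : ContDiff ℝ 2 F := contDiff_pi.2 fun m => by
    simp_rw [hF]
    exact ContDiff.sum fun ν _ => ((hpC m ν).sub (hdC m ν)).of_le (by norm_num)
  have hc₁ : c 1 = a 1 0 := by simp [hc, Fin.sum_univ_two, hexp 1 1 le_rfl]
  refine mprk_update_expansion hp hd hFeq hF₂.contDiffAt hyn hord1 (hc₁ ▸ hord2) ?_
    ((hsch.and hstage).mono fun h hh => mprk2_update_eq hh.2.1 hh.1.2.2.2.2.2)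
    (isBigO_pi.2 hynextbdd) (isBigO_pi.2 hσ)
  simpa only [hFeq] using mprk_stage_expansion hp hd hyn (hstage.mono fun h hh => hh.2)
    (isBigO_pi.2 hratiobdd) (isBigO_pi.2 hρ)

/-- Second-order sufficiency for 2-stage MPRK schemes (cf. Theorem 5.6 of
Izgin–Ketcheson–Meister): if ρ_{2ν} = yⁿ_ν + O(h) and
σ_μ = yⁿ_μ + h F_μ(yⁿ) + O(h²), then the MPRK scheme is of order at least two.
Stage indices are 0-based: index 1 is the second stage. -/
theorem stmt13 (N : ℕ)
    (p d : Fin N → Fin N → (Fin N → ℝ) → ℝ)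
    (hp0 : ∀ m ν y, 0 ≤ p m ν y) (hd0 : ∀ m ν y, 0 ≤ d m ν y)
    (hpC : ∀ m ν, ContDiff ℝ 3 (p m ν)) (hdC : ∀ m ν, ContDiff ℝ 3 (d m ν))
    (hpL : ∀ m ν, ∃ K, LipschitzWith K (p m ν))
    (hdL : ∀ m ν, ∃ K, LipschitzWith K (d m ν))
    (hcons : ∀ m ν, p m ν = d ν m)
    (hdiagp : ∀ m, p m m = 0) (hdiagd : ∀ m, d m m = 0)
    (a : Fin 2 → Fin 2 → ℝ) (b c : Fin 2 → ℝ)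
    (hexp : ∀ i j : Fin 2, i ≤ j → a i j = 0)
    (ha : ∀ i j, 0 ≤ a i j) (hb : ∀ j, 0 ≤ b j)
    (hc : ∀ i, c i = ∑ j, a i j)
    (hord1 : b 0 + b 1 = 1) (hord2 : b 1 * c 1 = 1 / 2)
    (yn : Fin N → ℝ) (hyn : ∀ m, 0 < yn m)
    (F : (Fin N → ℝ) → (Fin N → ℝ))
    (hF : ∀ y m, F y m = ∑ ν, (p m ν y - d m ν y))
    (ρ : ℝ → Fin 2 → Fin N → ℝ) (σ : ℝ → Fin N → ℝ)
    (Y : ℝ → Fin 2 → Fin N → ℝ) (ynext : ℝ → Fin N → ℝ)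
    (hscheme : ∃ h₀ > (0 : ℝ), ∀ h ∈ Set.Ioc (0 : ℝ) h₀,
      (∀ (i : Fin 2) ν, i ≠ 0 → 0 < ρ h i ν) ∧
      (∀ ν, 0 < σ h ν) ∧
      (∀ i m, 0 < Y h i m) ∧ (∀ m, 0 < ynext h m) ∧
      (∀ i m, Y h i m = yn m +
        h * ∑ j ∈ Finset.univ.filter (fun j => j < i), a i j *
          ∑ ν, (p m ν (Y h j) * Y h i ν / ρ h i ν -
                d m ν (Y h j) * Y h i m / ρ h i m)) ∧
      (∀ m, ynext h m = yn m +
        h * ∑ j, b j *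
          ∑ ν, (p m ν (Y h j) * ynext h ν / σ h ν -
                d m ν (Y h j) * ynext h m / σ h m)))
    (hYbdd : ∀ ν, (fun h => Y h 1 ν) =O[𝓝[>] (0 : ℝ)] fun _ => (1 : ℝ))
    (hynextbdd : ∀ m, (fun h => ynext h m) =O[𝓝[>] (0 : ℝ)] fun _ => (1 : ℝ))
    (hratiobdd : ∀ ν,
      (fun h => Y h 1 ν / ρ h 1 ν) =O[𝓝[>] (0 : ℝ)] fun _ => (1 : ℝ))
    (hρ : ∀ ν, (fun h => ρ h 1 ν - yn ν) =O[𝓝[>] (0 : ℝ)] fun h => h)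
    (hσ : ∀ μ, (fun h => σ h μ - (yn μ + h * F yn μ))
      =O[𝓝[>] (0 : ℝ)] fun h => h ^ 2) :
    (fun h => ynext h - (yn + h • F yn + (h ^ 2 / 2) • fderiv ℝ F yn (F yn)))
      =O[𝓝[>] (0 : ℝ)] fun h => h ^ 3 :=
  stmt13_general N p d hpC hdC a b c hexp hc hord1 hord2 yn hyn F hF ρ σ Y ynext hscheme hynextbdd
    hratiobdd hρ hσ
end
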